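/- arXiv:1704.02903 — 4 statements merged into one kernel-verified Lean document; each statement's English description precedes it below -/
import Mathlib

section
/- For a classical channel P(x̃|x) acting on a source X with side information Y (joint distribution P(x,y)), the channel that extremizes the Information Bottleneck Lagrangian L = I(X;X̃) − β I(X̃;Y) − Σ_{x,x̃} λ(x) P(x̃|x) satisfies P(x̃|x) = P(x̃) e^{−β D(P(y|x) ‖ P(y|x̃))} / Z(x,β), where D(·‖·) is the Kullback–Leibler divergence and Z(x,β) is a normalizing factor. Equivalently: any critical point of L with respect to P(x̃|x) (subject to normalization) has this exponential form. -/
/-!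
At a channel with positive entries the Lagrangian `L` is differentiable, so `fderiv L Q = 0`
says that every partial derivative `∂L/∂Q(x̃|x)` vanishes; we compute it along the lines
`Q + s • v`. Differentiating `I(X;X̃)` and `I(X̃;Y)` produces, besides the logarithmic terms,
terms from the variation of the marginals, and these cancel because
`Σ_x P(x) Q(x̃|x) = P(x̃) = Σ_y P(x̃,y)`. What remains is
`P(x) log (Q(x̃|x) / P(x̃)) − β Σ_y P(x,y) log (P(x̃,y) / (P(x̃) P(y))) − λ(x) = 0`,
and the middle sum is a function of `x` alone minus `P(x) D(P(y|x) ‖ P(y|x̃))`.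
Solving for `Q(x̃|x)` gives the exponential form, `Z(x)` absorbing everything that depends on
`x` only.
-/

open scoped BigOperators

noncomputable section

variable {X Y Xt : Type*} [Fintype X] [Fintype Y] [Fintype Xt]

/-- Marginal `P(x)` of the joint distribution `P(x,y)`. -/
def margX (P : X → Y → ℝ) (x : X) : ℝ := ∑ y, P x y

/-- Marginal `P(y)` of the joint distribution `P(x,y)`. -/
def margY (P : X → Y → ℝ) (y : Y) : ℝ := ∑ x, P x y

/-- Output marginal `P(x̃) = Σ_x P(x) P(x̃|x)` induced by the channel `Q = P(x̃|x)`. -/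
def margXt (P : X → Y → ℝ) (Q : X → Xt → ℝ) (t : Xt) : ℝ := ∑ x, margX P x * Q x t

/-- Joint `P(x̃,y) = Σ_x P(x,y) P(x̃|x)` induced via the Markov chain `Y–X–X̃`. -/
def margXtY (P : X → Y → ℝ) (Q : X → Xt → ℝ) (t : Xt) (y : Y) : ℝ := ∑ x, P x y * Q x t

/-- Mutual information `I(X;X̃)` between the source and the channel output. -/
def mutInfoXXt (P : X → Y → ℝ) (Q : X → Xt → ℝ) : ℝ :=
  ∑ x, ∑ t, margX P x * Q x t * Real.log (Q x t / margXt P Q t)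

/-- Mutual information `I(X̃;Y)` between the channel output and the side information. -/
def mutInfoXtY (P : X → Y → ℝ) (Q : X → Xt → ℝ) : ℝ :=
  ∑ t, ∑ y, margXtY P Q t y * Real.log (margXtY P Q t y / (margXt P Q t * margY P y))

/-- The Information Bottleneck Lagrangian
`L(Q) = I(X;X̃) − β I(X̃;Y) − Σ_{x,x̃} λ(x) Q(x̃|x)`. -/
def ibLagrangian (β : ℝ) (lam : X → ℝ) (P : X → Y → ℝ) : (X → Xt → ℝ) → ℝ :=
  fun Q => mutInfoXXt P Q - β * mutInfoXtY P Q - ∑ x, ∑ t, lam x * Q x t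

/-- Kullback–Leibler divergence `D(P(y|x) ‖ P(y|x̃))`. -/
def klCond (P : X → Y → ℝ) (Q : X → Xt → ℝ) (x : X) (t : Xt) : ℝ :=
  ∑ y, (P x y / margX P x) * Real.log ((P x y / margX P x) / (margXtY P Q t y / margXt P Q t))

open Real Finset

section
variable {U V W : Type*}

def ibLagrangianPartial [Fintype U] [Fintype V] [Fintype W] (β : ℝ) (lam : U → ℝ)
    (P : U → V → ℝ) (Q : U → W → ℝ) (x : U) (t : W) : ℝ :=
  margX P x * log (Q x t / margXt P Q t)
    - β * ∑ y, P x y * log (margXtY P Q t y / (margXt P Q t * margY P y)) - lam x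

variable {P : U → V → ℝ} {Q : U → W → ℝ}

theorem margX_pos [Fintype V] [Nonempty V] (hP : ∀ x y, 0 < P x y) (x : U) : 0 < margX P x :=
  sum_pos (fun y _ => hP x y) univ_nonempty

theorem margY_pos [Fintype U] [Nonempty U] (hP : ∀ x y, 0 < P x y) (y : V) : 0 < margY P y :=
  sum_pos (fun x _ => hP x y) univ_nonempty

theorem margXt_pos [Fintype U] [Fintype V] [Nonempty U] [Nonempty V] (hP : ∀ x y, 0 < P x y)
    (hQ : ∀ x t, 0 < Q x t) (t : W) : 0 < margXt P Q t :=
  sum_pos (fun x _ => mul_pos (margX_pos hP x) (hQ x t)) univ_nonempty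

theorem margXtY_pos [Fintype U] [Nonempty U] (hP : ∀ x y, 0 < P x y) (hQ : ∀ x t, 0 < Q x t)
    (t : W) (y : V) : 0 < margXtY P Q t y :=
  sum_pos (fun x _ => mul_pos (hP x y) (hQ x t)) univ_nonempty

theorem sum_margXtY [Fintype U] [Fintype V] (t : W) :
    ∑ y, margXtY P Q t y = margXt P Q t := by
  simp only [margXtY, margXt, margX, sum_mul]
  exact sum_comm

theorem HasDerivAt.mul_log_div {u w : ℝ → ℝ} {u' w' s : ℝ} (hu : HasDerivAt u u' s)
    (hw : HasDerivAt w w' s) (hu0 : 0 < u s) (hw0 : 0 < w s) :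
    HasDerivAt (fun s => u s * Real.log (u s / w s))
      (u' * Real.log (u s / w s) + u' - u s * w' / w s) s := by
  refine (hu.mul ((hu.div hw hw0.ne').log (div_pos hu0 hw0).ne')).congr_deriv ?_
  simp only [Pi.div_apply]
  field_simp
  ring

theorem hasDerivAt_add_smul_apply (Q v : U → W → ℝ) (x : U) (t : W) (s : ℝ) :
    HasDerivAt (fun s : ℝ => (Q + s • v) x t) (v x t) s := by
  simpa using ((hasDerivAt_id s).mul_const (v x t)).const_add (Q x t)

theorem hasDerivAt_margXt_add_smul [Fintype U] [Fintype V] (Q v : U → W → ℝ) (t : W)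
    (s : ℝ) :
    HasDerivAt (fun s : ℝ => margXt P (Q + s • v) t) (margXt P v t) s :=
  HasDerivAt.fun_sum fun x _ => (hasDerivAt_add_smul_apply Q v x t s).const_mul (margX P x)

theorem hasDerivAt_margXtY_add_smul [Fintype U] (Q v : U → W → ℝ) (t : W) (y : V) (s : ℝ) :
    HasDerivAt (fun s : ℝ => margXtY P (Q + s • v) t y) (margXtY P v t y) s :=
  HasDerivAt.fun_sum fun x _ => (hasDerivAt_add_smul_apply Q v x t s).const_mul (P x y)

theorem hasDerivAt_mutInfoXXt_add_smul [Fintype U] [Fintype V] [Fintype W] (hQ : ∀ x t, 0 < Q x t)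
    (hm : ∀ t, 0 < margXt P Q t) (v : U → W → ℝ) :
    HasDerivAt (fun s : ℝ => mutInfoXXt P (Q + s • v))
      (∑ x, ∑ t, v x t * (margX P x * log (Q x t / margXt P Q t))) 0 := by
  have hterm : ∀ x t, HasDerivAt
      (fun s : ℝ => margX P x * ((Q + s • v) x t *
        log ((Q + s • v) x t / margXt P (Q + s • v) t)))
      (margX P x * (v x t * log (Q x t / margXt P Q t) + v x t
        - Q x t * margXt P v t / margXt P Q t)) 0 := fun x t => by
    simpa using ((hasDerivAt_add_smul_apply Q v x t 0).mul_log_div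
      (hasDerivAt_margXt_add_smul Q v t 0) (by simpa using hQ x t)
      (by simpa using hm t)).const_mul (margX P x)
  have hsum := HasDerivAt.fun_sum fun x (_ : x ∈ univ) =>
    HasDerivAt.fun_sum fun t (_ : t ∈ univ) => hterm x t
  simp only [← mul_assoc] at hsum
  refine hsum.congr_deriv ?_
  rw [sum_comm, sum_comm (f := fun x t => v x t * _)]
  refine sum_congr rfl fun t _ => ?_
  have hsplit : ∀ x, margX P x * (v x t * log (Q x t / margXt P Q t) + v x t
      - Q x t * margXt P v t / margXt P Q t) = v x t * (margX P x * log (Q x t / margXt P Q t))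
        + margX P x * v x t - margX P x * Q x t * (margXt P v t / margXt P Q t) := fun x => by
    ring
  simp only [hsplit, sum_add_distrib, sum_sub_distrib, ← sum_mul]
  change _ + margXt P v t - margXt P Q t * (margXt P v t / margXt P Q t) = _
  rw [mul_div_cancel₀ _ (hm t).ne']
  ring

theorem hasDerivAt_mutInfoXtY_add_smul [Fintype U] [Fintype V] [Fintype W]
    (hm : ∀ t, 0 < margXt P Q t) (hr : ∀ t y, 0 < margXtY P Q t y) (hb : ∀ y, 0 < margY P y)
    (v : U → W → ℝ) :
    HasDerivAt (fun s : ℝ => mutInfoXtY P (Q + s • v))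
      (∑ x, ∑ t, v x t * ∑ y, P x y * log (margXtY P Q t y / (margXt P Q t * margY P y)))
      0 := by
  have hterm : ∀ t y, HasDerivAt
      (fun s : ℝ => margXtY P (Q + s • v) t y *
        log (margXtY P (Q + s • v) t y / (margXt P (Q + s • v) t * margY P y)))
      (margXtY P v t y * log (margXtY P Q t y / (margXt P Q t * margY P y)) + margXtY P v t y
        - margXtY P Q t y * (margXt P v t * margY P y) / (margXt P Q t * margY P y)) 0 :=
    fun t y => by
      simpa using (hasDerivAt_margXtY_add_smul Q v t y 0).mul_log_div
        ((hasDerivAt_margXt_add_smul Q v t 0).mul_const (margY P y)) (by simpa using hr t y)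
        (by simpa using mul_pos (hm t) (hb y))
  refine (HasDerivAt.fun_sum fun t (_ : t ∈ univ) => HasDerivAt.fun_sum fun y (_ : y ∈ univ) =>
    hterm t y).congr_deriv ?_
  have hcancel : ∀ t, ∑ y, (margXtY P v t y * log (margXtY P Q t y / (margXt P Q t * margY P y))
      + margXtY P v t y - margXtY P Q t y * (margXt P v t * margY P y) / (margXt P Q t * margY P y))
      = ∑ y, margXtY P v t y * log (margXtY P Q t y / (margXt P Q t * margY P y)) := fun t => by
    have hsplit : ∀ y, margXtY P Q t y * (margXt P v t * margY P y) / (margXt P Q t * margY P y)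
        = margXtY P Q t y * (margXt P v t / margXt P Q t) := fun y => by
      rw [← mul_assoc, mul_div_mul_right _ _ (hb y).ne', mul_div_assoc]
    simp only [hsplit, sum_add_distrib, sum_sub_distrib, ← sum_mul, sum_margXtY]
    rw [mul_div_cancel₀ _ (hm t).ne']
    ring
  have hdr : ∀ t y, margXtY P v t y = ∑ x, P x y * v x t := fun _ _ => rfl
  rw [sum_congr rfl fun t _ => hcancel t]
  simp only [hdr, sum_mul, mul_sum]
  conv_rhs => rw [sum_comm]
  refine sum_congr rfl fun t _ => ?_
  conv_rhs => rw [sum_comm]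
  exact sum_congr rfl fun y _ => sum_congr rfl fun x _ => by ring

section Lagrangian
variable [Fintype U] [Fintype V] [Fintype W] {β : ℝ} {lam : U → ℝ}

theorem hasDerivAt_ibLagrangian_add_smul (hQ : ∀ x t, 0 < Q x t) (hm : ∀ t, 0 < margXt P Q t)
    (hr : ∀ t y, 0 < margXtY P Q t y) (hb : ∀ y, 0 < margY P y) (v : U → W → ℝ) :
    HasDerivAt (fun s : ℝ => ibLagrangian β lam P (Q + s • v))
      (∑ x, ∑ t, v x t * ibLagrangianPartial β lam P Q x t) 0 := by
  have hlin : HasDerivAt (fun s : ℝ => ∑ x, ∑ t, lam x * (Q + s • v) x t)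
      (∑ x, ∑ t, v x t * lam x) 0 :=
    HasDerivAt.fun_sum fun x _ => HasDerivAt.fun_sum fun t _ =>
      ((hasDerivAt_add_smul_apply Q v x t 0).const_mul (lam x)).congr_deriv (mul_comm _ _)
  refine (((hasDerivAt_mutInfoXXt_add_smul hQ hm v).sub
    ((hasDerivAt_mutInfoXtY_add_smul hm hr hb v).const_mul β)).sub hlin).congr_deriv ?_
  simp only [ibLagrangianPartial]
  rw [mul_sum, ← sum_sub_distrib, ← sum_sub_distrib]
  refine sum_congr rfl fun x _ => ?_
  rw [mul_sum, ← sum_sub_distrib, ← sum_sub_distrib]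
  exact sum_congr rfl fun t _ => by ring

theorem differentiableAt_ibLagrangian (hQ : ∀ x t, 0 < Q x t) (hm : ∀ t, 0 < margXt P Q t)
    (hr : ∀ t y, 0 < margXtY P Q t y) (hb : ∀ y, 0 < margY P y) :
    DifferentiableAt ℝ (ibLagrangian (Xt := W) β lam P) Q := by
  unfold ibLagrangian mutInfoXXt mutInfoXtY margXtY margXt at *
  fun_prop (disch := first
    | exact (div_pos (hQ _ _) (hm _)).ne'
    | exact (hm _).ne'
    | exact (div_pos (hr _ _) (mul_pos (hm _) (hb _))).ne'
    | exact (mul_pos (hm _) (hb _)).ne')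

theorem ibLagrangianPartial_eq_zero_of_fderiv_eq_zero (hQ : ∀ x t, 0 < Q x t)
    (hm : ∀ t, 0 < margXt P Q t) (hr : ∀ t y, 0 < margXtY P Q t y) (hb : ∀ y, 0 < margY P y)
    (hcrit : fderiv ℝ (ibLagrangian (Xt := W) β lam P) Q = 0) (x : U) (t : W) :
    ibLagrangianPartial β lam P Q x t = 0 := by
  classical
  set v : U → W → ℝ := Pi.single x (Pi.single t 1)
  have hline : HasDerivAt (fun s : ℝ => Q + s • v) v 0 := by
    simpa using ((hasDerivAt_id (0 : ℝ)).smul_const v).const_add Q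
  have hflat : HasDerivAt (fun s : ℝ => ibLagrangian β lam P (Q + s • v)) 0 0 := by
    have hF := (differentiableAt_ibLagrangian (β := β) (lam := lam) hQ hm hr hb).hasFDerivAt
    rw [hcrit, ← add_zero Q, ← zero_smul ℝ v] at hF
    exact hF.comp_hasDerivAt (0 : ℝ) hline
  have := (hasDerivAt_ibLagrangian_add_smul hQ hm hr hb v).unique hflat
  simpa [v, Pi.single_apply, ite_apply, ite_mul] using this
end Lagrangian

theorem sum_mul_log_margXtY_eq_sub_klCond [Fintype U] [Fintype V] {x : U} {t : W}
    (hP : ∀ y, 0 < P x y) (ha : 0 < margX P x) (hm : 0 < margXt P Q t)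
    (hr : ∀ y, 0 < margXtY P Q t y) (hb : ∀ y, 0 < margY P y) :
    ∑ y, P x y * log (margXtY P Q t y / (margXt P Q t * margY P y))
      = ∑ y, P x y * log (P x y / (margX P x * margY P y)) - margX P x * klCond P Q x t := by
  rw [klCond, mul_sum, ← sum_sub_distrib]
  refine sum_congr rfl fun y _ => ?_
  rw [← mul_assoc, mul_div_cancel₀ _ ha.ne', ← mul_sub,
    log_div (hr y).ne' (mul_pos hm (hb y)).ne', log_mul hm.ne' (hb y).ne',
    log_div (hP y).ne' (mul_pos ha (hb y)).ne', log_mul ha.ne' (hb y).ne',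
    log_div (div_pos (hP y) ha).ne' (div_pos (hr y) hm).ne',
    log_div (hP y).ne' ha.ne', log_div (hr y).ne' hm.ne']
  ring

end

theorem eq_mul_exp_div_exp_of_mul_log_div {a q m β k c lam : ℝ} (ha : 0 < a) (hq : 0 < q)
    (hm : 0 < m) (h : a * log (q / m) - β * (c - a * k) - lam = 0) :
    q = m * exp (-β * k) / exp (-((lam + β * c) / a)) := by
  have hlog : log (q / m) = (lam + β * c) / a - β * k := by
    field_simp
    linear_combination h
  calc q = m * exp (log (q / m)) := by rw [exp_log (div_pos hq hm)]; field_simp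
    _ = m * exp (-β * k) / exp (-((lam + β * c) / a)) := by
      rw [hlog, mul_div_assoc, ← exp_sub]
      ring_nf

theorem ib_critical_point_form_general (P : X → Y → ℝ) (Q : X → Xt → ℝ)
    (β : ℝ) (lam : X → ℝ)
    (hPpos : ∀ x y, 0 < P x y) (hPsum : ∑ x, ∑ y, P x y = 1)
    (hQpos : ∀ x t, 0 < Q x t)
    (hcrit : fderiv ℝ (ibLagrangian (Xt := Xt) β lam P) Q = 0) :
    ∃ Z : X → ℝ, ∀ x t,
      Q x t = margXt P Q t * Real.exp (-β * klCond P Q x t) / Z x := by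
  obtain ⟨x₀, -, hx₀⟩ := exists_ne_zero_of_sum_ne_zero (hPsum.trans_ne one_ne_zero)
  obtain ⟨y₀, -, -⟩ := exists_ne_zero_of_sum_ne_zero hx₀
  have : Nonempty X := ⟨x₀⟩
  have : Nonempty Y := ⟨y₀⟩
  have ha := margX_pos hPpos
  have hb := margY_pos hPpos
  have hm := margXt_pos hPpos hQpos
  have hr := margXtY_pos hPpos hQpos
  refine ⟨fun x => exp (-((lam x + β * ∑ y, P x y * log (P x y / (margX P x * margY P y)))
    / margX P x)), fun x t => ?_⟩
  have hstat := ibLagrangianPartial_eq_zero_of_fderiv_eq_zero hQpos hm hr hb hcrit x t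
  rw [ibLagrangianPartial, sum_mul_log_margXtY_eq_sub_klCond (hPpos x) (ha x) (hm t) (hr t) hb]
    at hstat
  exact eq_mul_exp_div_exp_of_mul_log_div (ha x) (hQpos x t) (hm t) hstat

/-- Any critical point of the Information Bottleneck Lagrangian (which already incorporates
the normalization constraint via the multipliers `λ(x)`) has the exponential form
`P(x̃|x) = P(x̃) e^{−β D(P(y|x) ‖ P(y|x̃))} / Z(x,β)`. -/
theorem ib_critical_point_form (P : X → Y → ℝ) (Q : X → Xt → ℝ)
    (β : ℝ) (hβ : 0 < β) (lam : X → ℝ)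
    (hPpos : ∀ x y, 0 < P x y) (hPsum : ∑ x, ∑ y, P x y = 1)
    (hQpos : ∀ x t, 0 < Q x t) (hQnorm : ∀ x, ∑ t, Q x t = 1)
    (hcrit : fderiv ℝ (ibLagrangian (Xt := Xt) β lam P) Q = 0) :
    ∃ Z : X → ℝ, ∀ x t,
      Q x t = margXt P Q t * Real.exp (-β * klCond P Q x t) / Z x :=
  ib_critical_point_form_general P Q β lam hPpos hPsum hQpos hcrit

end
end

section
/- For a Hermitian operator A on a finite-dimensional Hilbert space with spectrum in an open set U and a function f analytic on U, the directional derivative of A ↦ Tr f(A) in the direction of a Hermitian operator B is Tr(f'(A) B); that is, d/dε|_{ε=0} Tr f(A + εB) = Tr(f'(A)B). -/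
/-!
Choose a real polynomial `p` that agrees with `f` to first order at every eigenvalue of `A`
(Hermite interpolation, i.e. the Chinese remainder theorem for the ideals `((X - λ)²)`).
For polynomials the formula is algebra: `d/dε Tr (A + εB)ᵏ = k Tr (Aᵏ⁻¹ B)` by cyclicity of the
trace. The remainder `r = f - p` vanishes to first order on the spectrum of `A`, and by
Gershgorin's theorem in the eigenbasis of `A` every eigenvalue of `A + εB` lies within `O(|ε|)`
of an eigenvalue of `A`; hence `Tr r(A + εB) = ∑ᵢ r(λᵢ(A + εB)) = o(ε)`.
-/

open Matrix Polynomial Filter Topology Asymptotics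
open scoped Matrix.Norms.Operator

noncomputable def matFun {n : Type*} [Fintype n] [DecidableEq n]
    (f : ℝ → ℝ) (A : Matrix n n ℂ) : Matrix n n ℂ :=
  if h : A.IsHermitian then
    (Matrix.IsHermitian.eigenvectorUnitary h : Matrix n n ℂ) *
      Matrix.diagonal (fun i => ((f (h.eigenvalues i) : ℝ) : ℂ)) *
      star (Matrix.IsHermitian.eigenvectorUnitary h : Matrix n n ℂ)
  else 0

theorem Polynomial.exists_eval_eq_and_eval_derivative_eq {K : Type*} [Field K] (s : Finset K)
    (v dv : K → K) :
    ∃ p : K[X], ∀ x ∈ s, p.eval x = v x ∧ (derivative p).eval x = dv x := by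
  have hcop : Pairwise fun x y : s =>
      IsCoprime (Ideal.span {(X - C (x : K)) ^ 2}) (Ideal.span {(X - C (y : K)) ^ 2}) :=
    fun x y hxy => (Ideal.isCoprime_span_singleton_iff _ _).2
      ((pairwise_coprime_X_sub_C Subtype.val_injective hxy).pow)
  obtain ⟨p, hp⟩ := Ideal.exists_forall_sub_mem_ideal hcop
    fun x => C (v x) + C (dv x) * (X - C (x : K))
  refine ⟨p, fun x hx => ?_⟩
  obtain ⟨r, hr⟩ := Ideal.mem_span_singleton'.1 (hp ⟨x, hx⟩)
  rw [eq_add_of_sub_eq hr.symm]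
  simp [derivative_pow]

theorem hasDerivAt_zero_comp_of_abs_sub_le {ι : Type*} [Fintype ι] {h : ℝ → ℝ} {a : ι → ℝ}
    (h0 : ∀ j, h (a j) = 0) (hd : ∀ j, HasDerivAt h 0 (a j)) {x : ℝ → ℝ} {C : ℝ}
    (hx : ∀ ε, ∃ j, |x ε - a j| ≤ C * |ε|) :
    HasDerivAt (fun ε => h (x ε)) 0 0 := by
  -- `h (a k + s) = o(s)` uniformly in `k`, while `x ε = a (j ε) + t ε` with `t ε = O(ε)`.
  choose j hj using hx
  set t := fun ε => x ε - a (j ε)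
  have ht : t =O[𝓝 0] fun ε : ℝ => ε := IsBigO.of_bound C (Eventually.of_forall fun ε => hj ε)
  have hH : (fun s => ∑ k, |h (a k + s)|) =o[𝓝 0] fun s : ℝ => s := by
    refine IsLittleO.fun_sum fun k _ => ?_
    simpa [h0, Real.norm_eq_abs] using (hasDerivAt_iff_isLittleO_nhds_zero.1 (hd k)).norm_left
  have hx0 : x 0 = a (j 0) := by simpa [sub_eq_zero] using hj 0
  rw [hasDerivAt_iff_isLittleO_nhds_zero]
  refine IsBigO.trans_isLittleO ?_ ((hH.comp_tendsto (ht.trans_tendsto tendsto_id)).trans_isBigO ht)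
  refine IsBigO.of_bound 1 (Eventually.of_forall fun ε => ?_)
  have hmem : x ε = a (j ε) + t ε := by simp [t]
  simp only [zero_add, hx0, h0, sub_zero, smul_zero, Function.comp_apply, one_mul, Real.norm_eq_abs]
  rw [hmem]
  exact (Finset.single_le_sum (f := fun k => |h (a k + t ε)|) (fun k _ => abs_nonneg _)
    (Finset.mem_univ _)).trans (le_abs_self _)

theorem Matrix.IsHermitian.add_real_smul {n : Type*} {A B : Matrix n n ℂ} (hA : A.IsHermitian)
    (hB : B.IsHermitian) (ε : ℝ) : (A + ε • B).IsHermitian :=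
  hA.add (hB.smul (IsSelfAdjoint.all ε))

section

variable {n : Type*} [Fintype n]

theorem HasDerivAt.matrix_trace {γ : ℝ → Matrix n n ℂ} {γ' : Matrix n n ℂ} {t : ℝ}
    (h : HasDerivAt γ γ' t) : HasDerivAt (fun s => (γ s).trace) γ'.trace t :=
  (LinearMap.toContinuousLinearMap ((traceLinearMap n ℂ ℂ).restrictScalars ℝ)).hasFDerivAt
    |>.comp_hasDerivAt t h

variable [DecidableEq n]

theorem HasDerivAt.trace_pow {γ : ℝ → Matrix n n ℂ} {γ' : Matrix n n ℂ} {t : ℝ}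
    (h : HasDerivAt γ γ' t) (k : ℕ) :
    HasDerivAt (fun s => (γ s ^ k).trace) (k * (γ t ^ (k - 1) * γ').trace) t := by
  convert (h.fun_pow' k).matrix_trace using 1
  have hterm : ∀ i ∈ Finset.range k,
      (γ t ^ (k.pred - i) * γ' * γ t ^ i).trace = (γ t ^ (k - 1) * γ').trace := by
    intro i hi
    rw [trace_mul_cycle, ← pow_add, Nat.pred_eq_sub_one, Nat.add_sub_cancel' (by grind)]
  rw [trace_sum, Finset.sum_congr rfl hterm]
  simp

theorem HasDerivAt.trace_aeval {γ : ℝ → Matrix n n ℂ} {γ' : Matrix n n ℂ} {t : ℝ}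
    (h : HasDerivAt γ γ' t) (p : ℝ[X]) :
    HasDerivAt (fun s => (aeval (γ s) p).trace) (aeval (γ t) (derivative p) * γ').trace t := by
  induction p using Polynomial.induction_on' with
  | add p q hp hq => simpa [add_mul] using hp.fun_add hq
  | monomial k a =>
    have hfun : (fun s => (aeval (γ s) (monomial k a)).trace) = fun s => a • (γ s ^ k).trace := by
      funext s
      rw [aeval_monomial, Algebra.algebraMap_eq_smul_one, smul_one_mul, trace_smul]
    rw [hfun]
    refine ((h.trace_pow k).const_smul a).congr_deriv ?_
    rw [derivative_monomial, aeval_monomial, Algebra.algebraMap_eq_smul_one, smul_one_mul,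
      smul_mul_assoc, trace_smul, Complex.real_smul, Complex.real_smul]
    push_cast
    ring

theorem Matrix.IsHermitian.exists_abs_eigenvalues_sub_le {A M : Matrix n n ℂ}
    (hA : A.IsHermitian) (hM : M.IsHermitian) (i : n) :
    ∃ j, |hM.eigenvalues i - hA.eigenvalues j| ≤
      ‖Unitary.conjStarAlgAut ℂ _ (star hA.eigenvectorUnitary) (M - A)‖ := by
  set E := Unitary.conjStarAlgAut ℂ _ (star hA.eigenvectorUnitary) (M - A)
  have hconj : Unitary.conjStarAlgAut ℂ _ (star hA.eigenvectorUnitary) M =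
      diagonal (RCLike.ofReal ∘ hA.eigenvalues) + E := by
    rw [← hA.conjStarAlgAut_star_eigenvectorUnitary, ← map_add, add_sub_cancel]
  have hμ : Module.End.HasEigenvalue (toLin' (diagonal (RCLike.ofReal ∘ hA.eigenvalues) + E))
      (hM.eigenvalues i : ℂ) := by
    rw [Module.End.hasEigenvalue_iff_mem_spectrum, spectrum_toLin', ← hconj,
      Unitary.conjStarAlgAut_star_apply, Unitary.spectrum_star_left_conjugate,
      hM.spectrum_eq_image_range]
    exact ⟨_, Set.mem_range_self i, rfl⟩
  obtain ⟨k, hk⟩ := eigenvalue_mem_ball hμ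
  refine ⟨k, ?_⟩
  rw [Metric.mem_closedBall, dist_eq_norm, add_apply, diagonal_apply_eq,
    Finset.sum_congr rfl fun j hj => by
      rw [add_apply, diagonal_apply_ne _ (Finset.ne_of_mem_erase hj).symm, zero_add]] at hk
  have hrow : ∑ j, ‖E k j‖ ≤ ‖E‖ := by
    rw [linfty_opNorm_def]
    simpa using
      NNReal.coe_le_coe.2 (Finset.le_sup (f := fun k => ∑ j, ‖E k j‖₊) (Finset.mem_univ k))
  calc |hM.eigenvalues i - hA.eigenvalues k|
      = ‖((hM.eigenvalues i : ℂ) - ((hA.eigenvalues k : ℂ) + E k k)) + E k k‖ := by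
        rw [sub_add_eq_sub_sub, sub_add_cancel, ← Complex.ofReal_sub, Complex.norm_real,
          Real.norm_eq_abs]
    _ ≤ ∑ j ∈ Finset.univ.erase k, ‖E k j‖ + ‖E k k‖ :=
        (norm_add_le _ _).trans (add_le_add_left hk _)
    _ = ∑ j, ‖E k j‖ := Finset.sum_erase_add _ _ (Finset.mem_univ k)
    _ ≤ ‖E‖ := hrow

theorem trace_matFun (f : ℝ → ℝ) {A : Matrix n n ℂ} (hA : A.IsHermitian) :
    (matFun f A).trace = ∑ i, (f (hA.eigenvalues i) : ℂ) := by
  rw [matFun, dif_pos hA, trace_mul_comm, ← mul_assoc, Unitary.coe_star_mul_self, one_mul,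
    trace_diagonal]

theorem matFun_eq_cfc (f : ℝ → ℝ) {A : Matrix n n ℂ} (hA : A.IsHermitian) :
    matFun f A = cfc f A := by
  rw [hA.cfc_eq, matFun, dif_pos hA, IsHermitian.cfc, Unitary.conjStarAlgAut_apply]
  rfl

theorem matFun_congr {f g : ℝ → ℝ} {A : Matrix n n ℂ} (hA : A.IsHermitian)
    (hfg : ∀ i, f (hA.eigenvalues i) = g (hA.eigenvalues i)) :
    matFun f A = matFun g A := by
  simp only [matFun, dif_pos hA, hfg]

theorem matFun_add (f g : ℝ → ℝ) {A : Matrix n n ℂ} (hA : A.IsHermitian) :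
    matFun (f + g) A = matFun f A + matFun g A := by
  simp only [matFun, dif_pos hA, Pi.add_apply, Complex.ofReal_add, ← diagonal_add, mul_add,
    add_mul]

theorem aeval_eq_matFun {A : Matrix n n ℂ} (hA : A.IsHermitian) (p : ℝ[X]) :
    aeval A p = matFun (fun x => p.eval x) A := by
  rw [matFun_eq_cfc _ hA, cfc_polynomial p A hA.isSelfAdjoint]

theorem hasDerivAt_trace_matFun_add_smul_of_flat {A B : Matrix n n ℂ} (hA : A.IsHermitian)
    (hB : B.IsHermitian) {h : ℝ → ℝ} (h0 : ∀ j, h (hA.eigenvalues j) = 0)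
    (hd : ∀ j, HasDerivAt h 0 (hA.eigenvalues j)) :
    HasDerivAt (fun ε : ℝ => (matFun h (A + ε • B)).trace) 0 0 := by
  have hpath := hA.add_real_smul hB
  set C := ‖Unitary.conjStarAlgAut ℂ _ (star hA.eigenvectorUnitary) B‖
  have hclose (i : n) (ε : ℝ) : ∃ j, |(hpath ε).eigenvalues i - hA.eigenvalues j| ≤ C * |ε| := by
    obtain ⟨j, hj⟩ := hA.exists_abs_eigenvalues_sub_le (hpath ε) i
    refine ⟨j, hj.trans_eq ?_⟩
    rw [add_sub_cancel_left, Unitary.conjStarAlgAut_apply, mul_smul_comm, smul_mul_assoc,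
      norm_smul, Real.norm_eq_abs, mul_comm]
    rfl
  simp_rw [trace_matFun h (hpath _)]
  simpa using HasDerivAt.fun_sum fun i _ =>
    (hasDerivAt_zero_comp_of_abs_sub_le h0 hd (hclose i)).ofReal_comp

end

theorem trace_matFun_deriv_general {n : Type*} [Fintype n] [DecidableEq n]
    (A B : Matrix n n ℂ) (hA : A.IsHermitian) (hB : B.IsHermitian)
    (U : Set ℝ) (f : ℝ → ℝ) (hf : AnalyticOnNhd ℝ f U)
    (hspec : ∀ i, hA.eigenvalues i ∈ U) :
    HasDerivAt (fun ε : ℝ => (matFun f (A + ε • B)).trace)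
      ((matFun (deriv f) A * B).trace) 0 := by
  obtain ⟨p, hp⟩ := exists_eval_eq_and_eval_derivative_eq (Finset.univ.image hA.eigenvalues)
    f (deriv f)
  replace hp (j : n) := hp _ (Finset.mem_image_of_mem _ (Finset.mem_univ j))
  have hsplit (ε : ℝ) : (matFun f (A + ε • B)).trace =
      (aeval (A + ε • B) p).trace + (matFun (f - fun x => p.eval x) (A + ε • B)).trace := by
    have hM := hA.add_real_smul hB ε
    rw [aeval_eq_matFun hM, ← trace_add, ← matFun_add _ _ hM, add_sub_cancel]
  have hpoly := (((hasDerivAt_id' (0 : ℝ)).smul_const B).const_add A).trace_aeval p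
  have hrest : HasDerivAt (fun ε : ℝ => (matFun (f - fun x => p.eval x) (A + ε • B)).trace) 0 0 :=
    hasDerivAt_trace_matFun_add_smul_of_flat hA hB (fun j => sub_eq_zero.2 (hp j).1.symm)
      fun j => by
        simpa [(hp j).2] using
          (hf _ (hspec j)).differentiableAt.hasDerivAt.sub (p.hasDerivAt (hA.eigenvalues j))
  rw [funext hsplit]
  refine (hpoly.fun_add hrest).congr_deriv ?_
  rw [zero_smul, add_zero, add_zero, one_smul, aeval_eq_matFun hA,
    matFun_congr hA fun j => (hp j).2]

/-- For Hermitian `A` with spectrum inside an open set `U` and `f` analytic on `U`, the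
directional derivative of `A ↦ Tr f(A)` in the direction of a Hermitian `B` is `Tr(f'(A)B)`:
`d/dε|₀ Tr f(A + εB) = Tr(f'(A)B)`. -/
theorem trace_matFun_deriv {n : Type*} [Fintype n] [DecidableEq n]
    (A B : Matrix n n ℂ) (hA : A.IsHermitian) (hB : B.IsHermitian)
    (U : Set ℝ) (hU : IsOpen U) (f : ℝ → ℝ) (hf : AnalyticOnNhd ℝ f U)
    (hspec : ∀ i, hA.eigenvalues i ∈ U) :
    HasDerivAt (fun ε : ℝ => (matFun f (A + ε • B)).trace)
      ((matFun (deriv f) A * B).trace) 0 :=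
  trace_matFun_deriv_general A B hA hB U f hf hspec
end

section
/- Let ρ_{xy} = Σ_{a,b∈{↑,↓}} p_{ab} |ab⟩⟨ab| be a diagonal (classically correlated) two-qubit state with marginal ρ_x, and let τ_{x'x} = |w⟩⟨w| with |w⟩ = √(p_{↑↑}+p_{↑↓})|↑↑⟩ + √(p_{↓↑}+p_{↓↓})|↓↓⟩ be a purification of ρ_x. Let N be the dephasing channel N(ρ) = ½(K₁ρK₁† + K₂ρK₂†) with K₁ = |↑⟩⟨↑| − |↓⟩⟨↓| and K₂ = I. Then (N ⊗ I_y)(ρ_{xy}) = ρ_{xy} (so I(X̃;Y) = I(X;Y)), while the output τ_{x'x̃} = (I_{x'} ⊗ N)(τ_{x'x}) satisfies I(X';X̃)_{τ_{x'x̃}} = ½ I(X';X)_{τ_{x'x}}. -/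
/-
Dephasing a qubit averages a state with its conjugate by `Z = diag(1, -1)`, which erases the
coherences between different values of that qubit (`pinchFst`, `pinchSnd`). A classically
correlated state has no such coherences, so it is fixed. The purification
`|w⟩ = ∑ₐ √pₐ |aa⟩` is perfectly correlated, so dephasing either half of `|w⟩⟨w|` yields the same
classical state `diag(pₐ δₐᵦ)`. This does not change the marginals `diag(p)` (tracing out the
dephased factor is insensitive to the erased coherences), while the joint entropy rises from `0`
(`|w⟩⟨w|` is a projection, so its eigenvalues are `0` and `1`) to `S(p)`. Hence the mutual
information drops from `2 S(p)` to `S(p)`.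
-/

open scoped Kronecker BigOperators ComplexOrder
open Matrix

noncomputable section

/-- von Neumann entropy (natural log) of a Hermitian matrix via its eigenvalues. -/
noncomputable def vnEntropy {n : Type*} [Fintype n] [DecidableEq n] (ρ : Matrix n n ℂ) : ℝ :=
  if h : ρ.IsHermitian then -∑ i, h.eigenvalues i * Real.log (h.eigenvalues i) else 0

/-- A density operator: positive semidefinite with unit trace. -/
def IsDensity {n : Type*} [Fintype n] [DecidableEq n] (ρ : Matrix n n ℂ) : Prop :=
  ρ.PosSemidef ∧ ρ.trace = 1

/-- Partial trace over the second tensor factor. -/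
def ptraceSnd {A B : Type*} [Fintype A] [Fintype B] (ρ : Matrix (A × B) (A × B) ℂ) :
    Matrix A A ℂ :=
  Matrix.of fun a a' => ∑ b, ρ (a, b) (a', b)

/-- Partial trace over the first tensor factor. -/
def ptraceFst {A B : Type*} [Fintype A] [Fintype B] (ρ : Matrix (A × B) (A × B) ℂ) :
    Matrix B B ℂ :=
  Matrix.of fun b b' => ∑ a, ρ (a, b) (a, b')

/-- Quantum mutual information I(A;B) = S(ρ_A) + S(ρ_B) - S(ρ_AB). -/
noncomputable def mutInfo {A B : Type*} [Fintype A] [Fintype B] [DecidableEq A] [DecidableEq B]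
    (ρ : Matrix (A × B) (A × B) ℂ) : ℝ :=
  vnEntropy (ptraceSnd ρ) + vnEntropy (ptraceFst ρ) - vnEntropy ρ

/-- Trace norm of a Hermitian matrix: sum of the absolute values of its eigenvalues. -/
noncomputable def traceNorm {n : Type*} [Fintype n] [DecidableEq n] (M : Matrix n n ℂ) : ℝ :=
  if h : M.IsHermitian then ∑ i, |h.eigenvalues i| else 0

/-- Choi–Jamiołkowski matrix of a linear map on matrices. -/
def choiMatrix {X Xt : Type*} [Fintype X] [DecidableEq X] [Fintype Xt]
    (N : Matrix X X ℂ →ₗ[ℂ] Matrix Xt Xt ℂ) : Matrix (X × Xt) (X × Xt) ℂ :=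
  Matrix.of fun p q => N (Matrix.single p.1 q.1 1) p.2 q.2

/-- A completely positive trace preserving map (quantum channel), characterised by
positive semidefiniteness of its Choi matrix together with trace preservation. -/
structure IsCPTP {X Xt : Type*} [Fintype X] [DecidableEq X] [Fintype Xt] [DecidableEq Xt]
    (N : Matrix X X ℂ →ₗ[ℂ] Matrix Xt Xt ℂ) : Prop where
  cp : (choiMatrix N).PosSemidef
  tp : ∀ ρ, (N ρ).trace = ρ.trace

/-- Application of `N ⊗ I` to a bipartite state (channel acts on the first factor). -/
def applyFst {X Xt Y : Type*} [Fintype X] [DecidableEq X] [Fintype Y]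
    (N : Matrix X X ℂ →ₗ[ℂ] Matrix Xt Xt ℂ) (ρ : Matrix (X × Y) (X × Y) ℂ) :
    Matrix (Xt × Y) (Xt × Y) ℂ :=
  Matrix.of fun p q => ∑ i, ∑ j, N (Matrix.single i j 1) p.1 q.1 * ρ (i, p.2) (j, q.2)

/-- Application of `I ⊗ N` to a bipartite state (channel acts on the second factor). -/
def applySnd {X Xt Y : Type*} [Fintype X] [DecidableEq X] [Fintype Y]
    (N : Matrix X X ℂ →ₗ[ℂ] Matrix Xt Xt ℂ) (ρ : Matrix (Y × X) (Y × X) ℂ) :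
    Matrix (Y × Xt) (Y × Xt) ℂ :=
  Matrix.of fun p q => ∑ i, ∑ j, N (Matrix.single i j 1) p.2 q.2 * ρ (p.1, i) (q.1, j)

end

namespace Dephasing

section Entropy

open Polynomial

variable {n : Type*} [Fintype n] [DecidableEq n]

theorem vnEntropy_diagonal (d : n → ℝ) :
    vnEntropy (diagonal fun i => (d i : ℂ)) = -∑ i, d i * Real.log (d i) := by
  have hA : (diagonal fun i => (d i : ℂ)).IsHermitian := by
    simp [IsHermitian, diagonal_conjTranspose]
  have hroots : (Finset.univ.val.map fun i => (d i : ℂ)) =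
      Finset.univ.val.map fun i => (hA.eigenvalues i : ℂ) := by
    simpa [charpoly_diagonal, Function.comp_def,
      roots_prod _ _ (Finset.prod_ne_zero_iff.mpr fun i _ => X_sub_C_ne_zero _)]
      using hA.roots_charpoly_eq_eigenvalues
  rw [vnEntropy, dif_pos hA, neg_inj]
  have hsum := congrArg (fun s => (s.map fun z : ℂ => z.re * Real.log z.re).sum) hroots
  simp only [Multiset.map_map, Function.comp_def, Complex.ofReal_re] at hsum
  exact hsum.symm

theorem vnEntropy_eq_zero_of_isIdempotentElem {A : Matrix n n ℂ} (hA : IsIdempotentElem A) :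
    vnEntropy A = 0 := by
  rw [vnEntropy]
  split_ifs with hH
  · have h01 (i : n) : hH.eigenvalues i = 0 ∨ hH.eigenvalues i = 1 :=
      hA.spectrum_subset ℝ (hH.eigenvalues_mem_spectrum_real i)
    simp only [neg_eq_zero]
    refine Finset.sum_eq_zero fun i _ => ?_
    rcases h01 i with h | h <;> simp [h]
  · rfl

end Entropy

section Pinching

variable {X Y : Type*}

def pinchFst [DecidableEq X] (ρ : Matrix (X × Y) (X × Y) ℂ) : Matrix (X × Y) (X × Y) ℂ :=
  of fun q r => if q.1 = r.1 then ρ q r else 0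

def pinchSnd [DecidableEq Y] (ρ : Matrix (X × Y) (X × Y) ℂ) : Matrix (X × Y) (X × Y) ℂ :=
  of fun q r => if q.2 = r.2 then ρ q r else 0

theorem pinchFst_diagonal [DecidableEq X] [DecidableEq Y] (d : X × Y → ℂ) :
    pinchFst (diagonal d) = diagonal d := by
  ext q r
  by_cases h : q = r <;> simp [pinchFst, h]

theorem ptraceFst_pinchFst [Fintype X] [DecidableEq X] [Fintype Y]
    (ρ : Matrix (X × Y) (X × Y) ℂ) :
    ptraceFst (pinchFst ρ) = ptraceFst ρ := by
  ext b b'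
  simp [ptraceFst, pinchFst]

theorem ptraceSnd_pinchSnd [Fintype X] [Fintype Y] [DecidableEq Y]
    (ρ : Matrix (X × Y) (X × Y) ℂ) :
    ptraceSnd (pinchSnd ρ) = ptraceSnd ρ := by
  ext a a'
  simp [ptraceSnd, pinchSnd]

variable [Fintype X] [Fintype Y] [DecidableEq X] [DecidableEq Y]

theorem ptraceFst_diagonal (d : X × Y → ℂ) :
    ptraceFst (diagonal d) = diagonal fun b => ∑ a, d (a, b) := by
  ext b b'
  by_cases h : b = b' <;> simp [ptraceFst, h]

theorem ptraceSnd_diagonal (d : X × Y → ℂ) :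
    ptraceSnd (diagonal d) = diagonal fun a => ∑ b, d (a, b) := by
  ext a a'
  by_cases h : a = a' <;> simp [ptraceSnd, h]

end Pinching

section Qubit

variable {Y : Type*} [Fintype Y] [DecidableEq Y]

theorem qubitDephasing_fst_eq_pinchFst (ρ : Matrix (Fin 2 × Y) (Fin 2 × Y) ℂ) :
    (1 / 2 : ℂ) • ((diagonal ![1, -1] ⊗ₖ (1 : Matrix Y Y ℂ)) * ρ *
      ((diagonal ![1, -1])ᴴ ⊗ₖ (1 : Matrix Y Y ℂ)) + ρ) = pinchFst ρ := by
  rw [← diagonal_one, diagonal_conjTranspose, diagonal_kronecker_diagonal,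
    diagonal_kronecker_diagonal]
  ext ⟨a, b⟩ ⟨a', b'⟩
  fin_cases a <;> fin_cases a' <;> simp [pinchFst] <;> ring

theorem qubitDephasing_snd_eq_pinchSnd (ρ : Matrix (Y × Fin 2) (Y × Fin 2) ℂ) :
    (1 / 2 : ℂ) • (((1 : Matrix Y Y ℂ) ⊗ₖ diagonal ![1, -1]) * ρ *
      ((1 : Matrix Y Y ℂ) ⊗ₖ (diagonal ![1, -1])ᴴ) + ρ) = pinchSnd ρ := by
  rw [← diagonal_one, diagonal_conjTranspose, diagonal_kronecker_diagonal,
    diagonal_kronecker_diagonal]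
  ext ⟨a, b⟩ ⟨a', b'⟩
  fin_cases b <;> fin_cases b' <;> simp [pinchSnd] <;> ring

end Qubit

section Correlated

variable {X : Type*} [DecidableEq X] {w : X × X → ℂ}

theorem pinchFst_vecMulVec (hw : ∀ q, q.1 ≠ q.2 → w q = 0) :
    pinchFst (vecMulVec w (star w)) = diagonal fun q => w q * star (w q) := by
  ext q r
  by_cases hqr : q = r
  · simp [pinchFst, hqr, vecMulVec_apply]
  simp only [pinchFst, of_apply, vecMulVec_apply, Pi.star_apply, diagonal_apply_ne _ hqr]
  split_ifs with h1
  · by_cases hq : q.1 = q.2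
    · rw [hw r fun hr => hqr (Prod.ext h1 (by rw [← hq, h1, hr])), star_zero, mul_zero]
    · rw [hw q hq, zero_mul]
  · rfl

theorem pinchSnd_vecMulVec (hw : ∀ q, q.1 ≠ q.2 → w q = 0) :
    pinchSnd (vecMulVec w (star w)) = diagonal fun q => w q * star (w q) := by
  ext q r
  by_cases hqr : q = r
  · simp [pinchSnd, hqr, vecMulVec_apply]
  simp only [pinchSnd, of_apply, vecMulVec_apply, Pi.star_apply, diagonal_apply_ne _ hqr]
  split_ifs with h2
  · by_cases hq : q.1 = q.2
    · rw [hw r fun hr => hqr (Prod.ext (by rw [hq, h2, hr]) h2), star_zero, mul_zero]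
    · rw [hw q hq, zero_mul]
  · rfl

variable [Fintype X]

theorem ptraceSnd_diagonal_mul_star (hw : ∀ q, q.1 ≠ q.2 → w q = 0) :
    ptraceSnd (diagonal fun q => w q * star (w q)) =
      diagonal fun a => w (a, a) * star (w (a, a)) := by
  rw [ptraceSnd_diagonal]
  congr 1
  funext a
  exact Finset.sum_eq_single a (fun b _ hb => by simp [hw (a, b) hb.symm]) (by simp)

theorem ptraceFst_diagonal_mul_star (hw : ∀ q, q.1 ≠ q.2 → w q = 0) :
    ptraceFst (diagonal fun q => w q * star (w q)) =
      diagonal fun b => w (b, b) * star (w (b, b)) := by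
  rw [ptraceFst_diagonal]
  congr 1
  funext b
  exact Finset.sum_eq_single b (fun a _ hab => by simp [hw (a, b) hab]) (by simp)

theorem vnEntropy_diagonal_mul_star (hw : ∀ q, q.1 ≠ q.2 → w q = 0) :
    vnEntropy (diagonal fun q => w q * star (w q)) =
      vnEntropy (diagonal fun a => w (a, a) * star (w (a, a))) := by
  simp only [Complex.star_def, Complex.mul_conj, vnEntropy_diagonal, Fintype.sum_prod_type]
  congr 1
  refine Finset.sum_congr rfl fun a _ => Finset.sum_eq_single a (fun b _ hb => ?_) (by simp)
  simp [hw (a, b) hb.symm]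

theorem mutInfo_pinchSnd_vecMulVec (hw : ∀ q, q.1 ≠ q.2 → w q = 0)
    (hnorm : star w ⬝ᵥ w = 1) :
    mutInfo (pinchSnd (vecMulVec w (star w))) = 1 / 2 * mutInfo (vecMulVec w (star w)) := by
  have hpure : IsIdempotentElem (vecMulVec w (star w)) := by
    rw [IsIdempotentElem, vecMulVec_mul_vecMulVec, hnorm, one_smul]
  have hSnd :
      ptraceSnd (vecMulVec w (star w)) = ptraceSnd (diagonal fun q => w q * star (w q)) := by
    rw [← ptraceSnd_pinchSnd, pinchSnd_vecMulVec hw]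
  have hFst :
      ptraceFst (vecMulVec w (star w)) = ptraceFst (diagonal fun q => w q * star (w q)) := by
    rw [← ptraceFst_pinchFst, pinchFst_vecMulVec hw]
  rw [mutInfo, mutInfo, vnEntropy_eq_zero_of_isIdempotentElem hpure, hSnd, hFst,
    pinchSnd_vecMulVec hw, ptraceSnd_diagonal_mul_star hw, ptraceFst_diagonal_mul_star hw,
    vnEntropy_diagonal_mul_star hw]
  ring

end Correlated

end Dephasing

open Dephasing in
theorem dephasing_example_general
    (p : Fin 2 → Fin 2 → ℝ) (hsum : ∑ a, ∑ b, p a b = 1)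
    (px : Fin 2 → ℝ) (hpx : px = fun a => p a 0 + p a 1)
    (hpos : ∀ a, 0 < px a)
    (ρxy : Matrix (Fin 2 × Fin 2) (Fin 2 × Fin 2) ℂ)
    (hρxy : ρxy = Matrix.of fun q r => if q = r then ((p q.1 q.2 : ℝ) : ℂ) else 0)
    (w : Fin 2 × Fin 2 → ℂ)
    (hw : w = fun q => if q.1 = q.2 then ((Real.sqrt (px q.1) : ℝ) : ℂ) else 0)
    (τ : Matrix (Fin 2 × Fin 2) (Fin 2 × Fin 2) ℂ)
    (hτ : τ = Matrix.of fun q r => w q * star (w r))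
    (K₁ : Matrix (Fin 2) (Fin 2) ℂ) (hK₁ : K₁ = Matrix.diagonal ![1, -1])
    (ρout : Matrix (Fin 2 × Fin 2) (Fin 2 × Fin 2) ℂ)
    (hρout : ρout = ((1 : ℂ)/2) •
      ((K₁ ⊗ₖ (1 : Matrix (Fin 2) (Fin 2) ℂ)) * ρxy * ((K₁ᴴ) ⊗ₖ (1 : Matrix (Fin 2) (Fin 2) ℂ))
        + ρxy))
    (τout : Matrix (Fin 2 × Fin 2) (Fin 2 × Fin 2) ℂ)
    (hτout : τout = ((1 : ℂ)/2) •
      (((1 : Matrix (Fin 2) (Fin 2) ℂ) ⊗ₖ K₁) * τ * ((1 : Matrix (Fin 2) (Fin 2) ℂ) ⊗ₖ (K₁ᴴ))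
        + τ)) :
    ρout = ρxy ∧ mutInfo τout = (1/2) * mutInfo τ := by
  subst hρxy hK₁ hρout hτout hτ
  refine ⟨by rw [qubitDephasing_fst_eq_pinchFst]; exact pinchFst_diagonal _, ?_⟩
  have hw_diag : ∀ q : Fin 2 × Fin 2, q.1 ≠ q.2 → w q = 0 := fun q hq => by simp [hw, hq]
  have hw_norm : star w ⬝ᵥ w = 1 := by
    have hpx_sum : px 0 + px 1 = 1 := by
      rw [← hsum, hpx]
      simp [Fin.sum_univ_two]
    simp only [hw, dotProduct, Fintype.sum_prod_type, Fin.sum_univ_two, Pi.star_apply]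
    simp [← Complex.ofReal_mul, Real.mul_self_sqrt (hpos _).le]
    exact_mod_cast hpx_sum
  rw [qubitDephasing_snd_eq_pinchSnd]
  exact mutInfo_pinchSnd_vecMulVec hw_diag hw_norm

/-- The two-qubit dephasing example: for the classically correlated state
`ρ_{xy} = Σ_{ab} p_{ab} |ab⟩⟨ab|` with purification `τ_{x'x} = |w⟩⟨w|`,
`|w⟩ = √(p_{↑↑}+p_{↑↓})|↑↑⟩ + √(p_{↓↑}+p_{↓↓})|↓↓⟩`, and the dephasing channel
`N(ρ) = ½(K₁ρK₁† + ρ)` with `K₁ = |↑⟩⟨↑| − |↓⟩⟨↓|`, one has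
`(N ⊗ I_y)(ρ_{xy}) = ρ_{xy}` (hence `I(X̃;Y) = I(X;Y)`), while
`I(X';X̃)_{(I ⊗ N)(τ)} = ½ I(X';X)_τ`.  (Basis: `0 = ↑`, `1 = ↓`.) -/
theorem dephasing_example
    (p : Fin 2 → Fin 2 → ℝ) (hp : ∀ a b, 0 ≤ p a b) (hsum : ∑ a, ∑ b, p a b = 1)
    (px : Fin 2 → ℝ) (hpx : px = fun a => p a 0 + p a 1)
    (hpos : ∀ a, 0 < px a)
    (ρxy : Matrix (Fin 2 × Fin 2) (Fin 2 × Fin 2) ℂ)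
    (hρxy : ρxy = Matrix.of fun q r => if q = r then ((p q.1 q.2 : ℝ) : ℂ) else 0)
    (w : Fin 2 × Fin 2 → ℂ)
    (hw : w = fun q => if q.1 = q.2 then ((Real.sqrt (px q.1) : ℝ) : ℂ) else 0)
    (τ : Matrix (Fin 2 × Fin 2) (Fin 2 × Fin 2) ℂ)
    (hτ : τ = Matrix.of fun q r => w q * star (w r))
    (K₁ : Matrix (Fin 2) (Fin 2) ℂ) (hK₁ : K₁ = Matrix.diagonal ![1, -1])
    (ρout : Matrix (Fin 2 × Fin 2) (Fin 2 × Fin 2) ℂ)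
    (hρout : ρout = ((1 : ℂ)/2) •
      ((K₁ ⊗ₖ (1 : Matrix (Fin 2) (Fin 2) ℂ)) * ρxy * ((K₁ᴴ) ⊗ₖ (1 : Matrix (Fin 2) (Fin 2) ℂ))
        + ρxy))
    (τout : Matrix (Fin 2 × Fin 2) (Fin 2 × Fin 2) ℂ)
    (hτout : τout = ((1 : ℂ)/2) •
      (((1 : Matrix (Fin 2) (Fin 2) ℂ) ⊗ₖ K₁) * τ * ((1 : Matrix (Fin 2) (Fin 2) ℂ) ⊗ₖ (K₁ᴴ))
        + τ)) :
    ρout = ρxy ∧ mutInfo τout = (1/2) * mutInfo τ :=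
  dephasing_example_general p hsum px hpx hpos ρxy hρxy w hw τ hτ K₁ hK₁ ρout hρout τout hτout
end

section
/- In the diagonal (commuting) case, the quantum optimal-channel formula reduces to the classical one: suppose all density operators ρ_x, ρ_{x̃}, ρ_{xy}, ρ_{x̃y} and the Choi matrix Ψ_{xx̃} are diagonal in fixed product bases, with entries giving probability distributions P(x), P(x̃), P(x,y), P(x̃,y) and the channel P(x̃|x) given by the diagonal entries ⟨x x̃|Ψ_{xx̃}|x x̃⟩, suitably normalized by P(x). Then the operator equation Ψ_{xx̃}^{T_x} = (ρ_x ⊗ I)^{-1/2} exp( log ρ_{x̃} ⊗ I − D^{βy}_{xx̃} + Λ̃_x ⊗ I ) (ρ_x ⊗ I)^{-1/2}, with D^{βy}_{xx̃} = β log ρ_{x̃} ⊗ I − β Tr_y{ ρ_x^{-1/2} ρ_{xy} ρ_x^{-1/2} (log ρ_{x̃y} ⊗ I) }, is equivalent to P(x̃|x) = P(x̃) e^{−β D(P(y|x)‖P(y|x̃)) + λ̃(x)} for suitable normalization constants λ̃(x). -/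
open scoped BigOperators
open Matrix

noncomputable section

/-- Partial transpose on the first tensor factor (in the fixed basis). -/
def ptransposeFst {A B : Type*} (M : Matrix (A × B) (A × B) ℂ) : Matrix (A × B) (A × B) ℂ :=
  Matrix.of fun p q => M (q.1, p.2) (p.1, q.2)

/-- Kullback–Leibler divergence `D(P(y|x) ‖ P(y|x̃))` built from the diagonal data. -/
def klDiag {X Xt Y : Type*} [Fintype Y]
    (P : X → ℝ) (Pt : Xt → ℝ) (Pxy : X → Y → ℝ) (Pty : Xt → Y → ℝ) (x : X) (t : Xt) : ℝ :=
  ∑ y, (Pxy x y / P x) * Real.log ((Pxy x y / P x) / (Pty t y / Pt t))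

lemma ptransposeFst_diagonal {A B : Type*} [DecidableEq A] [DecidableEq B]
    (d : A × B → ℂ) :
    ptransposeFst (Matrix.diagonal d) = Matrix.diagonal d := by
  ext ⟨pa, pb⟩ ⟨qa, qb⟩
  simp only [ptransposeFst, Matrix.of_apply, Matrix.diagonal_apply, Prod.mk.injEq,
    Prod.ext_iff]
  by_cases h1 : pa = qa
  · subst h1
    by_cases h2 : pb = qb
    · subst h2; simp
    · simp [h2]
  · simp only [h1, and_false, if_false, if_neg (fun h : qa = pa ∧ pb = qb => h1 h.1.symm)]
    simp [h1]

set_option maxHeartbeats 1000000 in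
/-- In the diagonal (commuting) case the quantum optimal-channel formula reduces to the
classical one: for strictly positive diagonal data `P(x), P(x̃), P(x,y), P(x̃,y)` and channel
`P(x̃|x) = Q x x̃` (diagonal Choi matrix), the operator equation
`Ψ_{xx̃}^{T_x} = (ρ_x ⊗ I)^{-1/2} exp( log ρ_{x̃} ⊗ I − D^{βy}_{xx̃} + Λ̃_x ⊗ I ) (ρ_x ⊗ I)^{-1/2}`
with `D^{βy}_{xx̃} = β log ρ_{x̃} ⊗ I − β Tr_y{ρ_x^{-1/2} ρ_{xy} ρ_x^{-1/2}(log ρ_{x̃y} ⊗ I)}`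
(all matrix functions acting entrywise on diagonal matrices) holds for some diagonal
Lagrange multiplier `Λ̃_x` if and only if
`P(x̃|x) = P(x̃) e^{−β D(P(y|x)‖P(y|x̃)) + λ̃(x)}` for suitable constants `λ̃(x)`. -/
theorem diagonal_channel_formula_reduces_to_classical
    {X Xt Y : Type*} [Fintype X] [DecidableEq X] [Fintype Xt] [DecidableEq Xt]
    [Fintype Y] [DecidableEq Y]
    (P : X → ℝ) (Pt : Xt → ℝ) (Pxy : X → Y → ℝ) (Pty : Xt → Y → ℝ)
    (Q : X → Xt → ℝ) (β : ℝ)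
    (hP : ∀ x, 0 < P x) (hPt : ∀ t, 0 < Pt t)
    (hPxy : ∀ x y, 0 < Pxy x y) (hPty : ∀ t y, 0 < Pty t y)
    (hQ : ∀ x t, 0 < Q x t)
    (hmargP : ∀ x, P x = ∑ y, Pxy x y)
    (hmargPt : ∀ t, Pt t = ∑ y, Pty t y) :
    -- the diagonal matrices involved
    (∃ lam : X → ℝ,
      ptransposeFst (Matrix.diagonal (fun p : X × Xt => ((Q p.1 p.2 : ℝ) : ℂ))) =
        Matrix.diagonal (fun p : X × Xt => (((Real.sqrt (P p.1))⁻¹ : ℝ) : ℂ)) *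
        NormedSpace.exp
          (Matrix.diagonal (fun p : X × Xt => ((Real.log (Pt p.2) : ℝ) : ℂ))
            - Matrix.diagonal (fun p : X × Xt =>
                ((β * Real.log (Pt p.2)
                  - β * ∑ y, (Pxy p.1 y / P p.1) * Real.log (Pty p.2 y) : ℝ) : ℂ))
            + Matrix.diagonal (fun p : X × Xt => ((lam p.1 : ℝ) : ℂ))) *
        Matrix.diagonal (fun p : X × Xt => (((Real.sqrt (P p.1))⁻¹ : ℝ) : ℂ)))
    ↔
    (∃ lam' : X → ℝ, ∀ x t,
      Q x t = Pt t * Real.exp (-β * klDiag P Pt Pxy Pty x t + lam' x)) := by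
  classical
  -- Step 1: reduce the matrix statement to an entrywise scalar statement.
  have hsq : ∀ x, (Real.sqrt (P x))⁻¹ * (Real.sqrt (P x))⁻¹ = (P x)⁻¹ := by
    intro x
    rw [← mul_inv, Real.mul_self_sqrt (hP x).le]
  -- exponent function (real)
  set E : X → Xt → ℝ → ℝ := fun x t l =>
    Real.log (Pt t) - (β * Real.log (Pt t)
      - β * ∑ y, (Pxy x y / P x) * Real.log (Pty t y)) + l with hE
  have hmat : ∀ lam : X → ℝ,
      (ptransposeFst (Matrix.diagonal (fun p : X × Xt => ((Q p.1 p.2 : ℝ) : ℂ))) =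
        Matrix.diagonal (fun p : X × Xt => (((Real.sqrt (P p.1))⁻¹ : ℝ) : ℂ)) *
        NormedSpace.exp
          (Matrix.diagonal (fun p : X × Xt => ((Real.log (Pt p.2) : ℝ) : ℂ))
            - Matrix.diagonal (fun p : X × Xt =>
                ((β * Real.log (Pt p.2)
                  - β * ∑ y, (Pxy p.1 y / P p.1) * Real.log (Pty p.2 y) : ℝ) : ℂ))
            + Matrix.diagonal (fun p : X × Xt => ((lam p.1 : ℝ) : ℂ))) *
        Matrix.diagonal (fun p : X × Xt => (((Real.sqrt (P p.1))⁻¹ : ℝ) : ℂ)))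
      ↔ (∀ x t, Q x t = Real.exp (E x t (lam x)) / P x) := by
    intro lam
    rw [ptransposeFst_diagonal, Matrix.diagonal_sub, Matrix.diagonal_add,
      Matrix.exp_diagonal, Matrix.diagonal_mul_diagonal, Matrix.diagonal_mul_diagonal]
    rw [Function.Injective.eq_iff (Matrix.diagonal_injective)]
    constructor
    · intro h x t
      have := congrFun h (x, t)
      simp only [Pi.coe_exp] at this
      rw [← Complex.exp_eq_exp_ℂ] at this
      have h2 : ((Q x t : ℝ) : ℂ) =
          (((Real.sqrt (P x))⁻¹ : ℝ) : ℂ) * Complex.exp ((E x t (lam x) : ℝ) : ℂ) *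
            (((Real.sqrt (P x))⁻¹ : ℝ) : ℂ) := by
        convert this using 3
        push_cast [hE]
        ring
      rw [← Complex.ofReal_exp] at h2
      have h3 : Q x t = (Real.sqrt (P x))⁻¹ * Real.exp (E x t (lam x)) * (Real.sqrt (P x))⁻¹ := by
        exact_mod_cast h2
      rw [h3]
      rw [mul_comm _ ((Real.sqrt (P x))⁻¹), ← mul_assoc, hsq, div_eq_mul_inv]
      ring
    · intro h
      funext p
      rcases p with ⟨x, t⟩
      simp only [Pi.coe_exp]
      rw [← Complex.exp_eq_exp_ℂ]
      have h3 : Q x t = (Real.sqrt (P x))⁻¹ * Real.exp (E x t (lam x)) * (Real.sqrt (P x))⁻¹ := by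
        rw [h x t, mul_comm _ ((Real.sqrt (P x))⁻¹), ← mul_assoc, hsq, div_eq_mul_inv]
        ring
      have h2 : ((Q x t : ℝ) : ℂ) =
          (((Real.sqrt (P x))⁻¹ : ℝ) : ℂ) * Complex.exp ((E x t (lam x) : ℝ) : ℂ) *
            (((Real.sqrt (P x))⁻¹ : ℝ) : ℂ) := by
        rw [← Complex.ofReal_exp]
        exact_mod_cast h3
      convert h2 using 3
      push_cast [hE]
      ring
  -- Step 2: classical side rewritten with the same exponent.
  have hsum1 : ∀ x, (∑ y, Pxy x y / P x) = 1 := by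
    intro x
    rw [← Finset.sum_div, ← hmargP x, div_self (hP x).ne']
  have hkl : ∀ x t, klDiag P Pt Pxy Pty x t =
      (∑ y, (Pxy x y / P x) * Real.log (Pxy x y / P x))
      - (∑ y, (Pxy x y / P x) * Real.log (Pty t y)) + Real.log (Pt t) := by
    intro x t
    unfold klDiag
    have : ∀ y : Y, (Pxy x y / P x) * Real.log ((Pxy x y / P x) / (Pty t y / Pt t)) =
        (Pxy x y / P x) * Real.log (Pxy x y / P x)
        - (Pxy x y / P x) * Real.log (Pty t y)
        + (Pxy x y / P x) * Real.log (Pt t) := by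
      intro y
      rw [Real.log_div (div_pos (hPxy x y) (hP x)).ne' (div_pos (hPty t y) (hPt t)).ne',
        Real.log_div (hPty t y).ne' (hPt t).ne']
      ring
    rw [Finset.sum_congr rfl fun y _ => this y]
    rw [Finset.sum_add_distrib, Finset.sum_sub_distrib, ← Finset.sum_mul, hsum1 x, one_mul]
  -- the correspondence between the two Lagrange multipliers
  have key : ∀ (lam : X → ℝ) (x : X) (t : Xt),
      Real.exp (E x t (lam x)) / P x =
      Pt t * Real.exp (-β * klDiag P Pt Pxy Pty x t +
        (lam x - Real.log (P x) + β * ∑ y, (Pxy x y / P x) * Real.log (Pxy x y / P x))) := by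
    intro lam x t
    have h1 : Real.exp (E x t (lam x)) / P x
        = Real.exp (E x t (lam x) - Real.log (P x)) := by
      rw [Real.exp_sub, Real.exp_log (hP x)]
    have h2 : ∀ w : ℝ, Pt t * Real.exp w = Real.exp (Real.log (Pt t) + w) := by
      intro w; rw [Real.exp_add, Real.exp_log (hPt t)]
    rw [h1, h2, Real.exp_eq_exp, hkl x t]
    simp only [hE]
    ring
  constructor
  · rintro ⟨lam, h⟩
    refine ⟨fun x => lam x - Real.log (P x)
      + β * ∑ y, (Pxy x y / P x) * Real.log (Pxy x y / P x), fun x t => ?_⟩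
    rw [(hmat lam).mp h x t, key lam x t]
  · rintro ⟨lam', h⟩
    set lam0 : X → ℝ := fun x => lam' x + Real.log (P x)
      - β * ∑ y, (Pxy x y / P x) * Real.log (Pxy x y / P x) with hlam0
    refine ⟨lam0, (hmat lam0).mpr fun x t => ?_⟩
    rw [key lam0 x t, h x t]
    congr 2
    simp only [hlam0]
    ring

end
end
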